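/- arXiv:2310.07208 — 5 statements merged into one kernel-verified Lean document; each statement's English description precedes it below -/
import Mathlib

section
/- Let k, ℓ, m be positive natural numbers and let weights w_1,…,w_N be nonnegative reals with Σ_i w_i ≤ k/ℓ, and let values a_1,…,a_N be nonnegative reals with Σ_i w_i·a_i ≥ m. If additionally each w_i ≤ 1, then the sum of the ⌊k/ℓ⌋ largest values among a_1,…,a_N (or all of them if N ≤ ⌊k/ℓ⌋) is at least (m/(k/ℓ))·⌊k/ℓ⌋. -/
/-! Let `S` be the sum of the `t` largest values (the set `T`) and `b` the smallest of them.
As `b` separates the values on and off `T`, raising every weight to `1` on `T` and lowering it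
to `0` off `T` increases `∑ wᵢ aᵢ` by at least `b` times the increase of `∑ wᵢ`, so
`m ≤ ∑ wᵢ aᵢ ≤ S + b (W - t)` with `W = k / ℓ`; since `b t ≤ S` and `t ≤ W`, this gives
`m t ≤ S t + S (W - t) = S W`. -/

open Finset

section WeightedTopSum

variable {ι : Type*} [Fintype ι] {w a : ι → ℝ} {T : Finset ι}

theorem weighted_sum_le_sum_add_threshold_mul [DecidableEq ι] (hw0 : ∀ i, 0 ≤ w i)
    (hw1 : ∀ i, w i ≤ 1) {b : ℝ} (hbT : ∀ i ∈ T, b ≤ a i) (hbTc : ∀ j ∉ T, a j ≤ b) :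
    ∑ i, w i * a i ≤ ∑ i ∈ T, a i + b * (∑ i, w i - #T) := by
  have hT : ∑ i ∈ T, w i * a i ≤ ∑ i ∈ T, (a i + b * (w i - 1)) :=
    sum_le_sum fun i hi => by nlinarith [hbT i hi, hw1 i]
  have hTc : ∑ i ∈ Tᶜ, w i * a i ≤ ∑ i ∈ Tᶜ, b * w i :=
    sum_le_sum fun i hi => by nlinarith [hbTc i (mem_compl.mp hi), hw0 i]
  calc ∑ i, w i * a i = ∑ i ∈ T, w i * a i + ∑ i ∈ Tᶜ, w i * a i :=
        (sum_add_sum_compl T _).symm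
    _ ≤ ∑ i ∈ T, (a i + b * (w i - 1)) + ∑ i ∈ Tᶜ, b * w i := add_le_add hT hTc
    _ = ∑ i ∈ T, a i + b * (∑ i, w i - #T) := by
        rw [← sum_add_sum_compl T w]
        simp only [sum_add_distrib, ← mul_sum, sum_sub_distrib, sum_const, nsmul_eq_mul, mul_one]
        ring

theorem weighted_sum_mul_card_le_mul_sum_top (hw0 : ∀ i, 0 ≤ w i) (hw1 : ∀ i, w i ≤ 1)
    (ha0 : ∀ i, 0 ≤ a i) {W : ℝ} (hwsum : ∑ i, w i ≤ W) (hTW : (#T : ℝ) ≤ W)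
    (hTtop : ∀ i ∈ T, ∀ j, j ∉ T → a j ≤ a i) :
    (∑ i, w i * a i) * #T ≤ W * ∑ i ∈ T, a i := by
  classical
  rcases T.eq_empty_or_nonempty with rfl | hT
  · simp
  obtain ⟨i₀, hi₀T, hi₀⟩ := T.exists_mem_eq_inf' hT a
  set b := T.inf' hT a
  have hbT : ∀ i ∈ T, b ≤ a i := fun i hi => inf'_le a hi
  have hbTc : ∀ j ∉ T, a j ≤ b := fun j hj => hi₀ ▸ hTtop i₀ hi₀T j hj
  have hb0 : 0 ≤ b := hi₀ ▸ ha0 i₀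
  have hbS : b * #T ≤ ∑ i ∈ T, a i := by
    simpa [mul_comm] using card_nsmul_le_sum T a b hbT
  have hsum : ∑ i, w i * a i ≤ ∑ i ∈ T, a i + b * (W - #T) :=
    (weighted_sum_le_sum_add_threshold_mul hw0 hw1 hbT hbTc).trans (by gcongr)
  calc (∑ i, w i * a i) * #T ≤ (∑ i ∈ T, a i + b * (W - #T)) * #T := by gcongr
    _ = (∑ i ∈ T, a i) * #T + b * #T * (W - #T) := by ring
    _ ≤ (∑ i ∈ T, a i) * #T + (∑ i ∈ T, a i) * (W - #T) := by gcongr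
    _ = W * ∑ i ∈ T, a i := by ring

end WeightedTopSum

theorem stmt6_general (k ℓ m N : ℕ)
    (w a : Fin N → ℝ)
    (hw0 : ∀ i, 0 ≤ w i) (hw1 : ∀ i, w i ≤ 1)
    (ha0 : ∀ i, 0 ≤ a i)
    (hwsum : ∑ i, w i ≤ (k : ℝ) / (ℓ : ℝ))
    (hwa : (m : ℝ) ≤ ∑ i, w i * a i)
    (T : Finset (Fin N)) (hTcard : T.card = min (k / ℓ) N)
    (hTtop : ∀ i ∈ T, ∀ j, j ∉ T → a j ≤ a i) :
    ((m : ℝ) / ((k : ℝ) / (ℓ : ℝ))) * ((k / ℓ : ℕ) : ℝ) ≤ ∑ i ∈ T, a i := by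
  have htW : ((k / ℓ : ℕ) : ℝ) ≤ (k : ℝ) / ℓ := Nat.cast_div_le
  have hS0 : 0 ≤ ∑ i ∈ T, a i := sum_nonneg fun i _ => ha0 i
  have key : (m : ℝ) * (k / ℓ : ℕ) ≤ (∑ i ∈ T, a i) * ((k : ℝ) / ℓ) := by
    rcases le_or_gt N (k / ℓ) with hN | hN
    · have hT : T = univ := eq_univ_of_card T (by simp [hTcard, hN])
      have hmS : (m : ℝ) ≤ ∑ i ∈ T, a i := hT ▸ hwa.trans
        (sum_le_sum fun i _ => mul_le_of_le_one_left (ha0 i) (hw1 i))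
      exact mul_le_mul hmS htW (Nat.cast_nonneg _) hS0
    · have hTcard' : #T = k / ℓ := by rw [hTcard, min_eq_left hN.le]
      have hmain := weighted_sum_mul_card_le_mul_sum_top hw0 hw1 ha0 hwsum
        (hTcard' ▸ htW) hTtop
      rw [hTcard'] at hmain
      calc (m : ℝ) * (k / ℓ : ℕ) ≤ (∑ i, w i * a i) * (k / ℓ : ℕ) := by gcongr
        _ ≤ (k : ℝ) / ℓ * ∑ i ∈ T, a i := hmain
        _ = (∑ i ∈ T, a i) * ((k : ℝ) / ℓ) := mul_comm _ _
  rw [div_mul_eq_mul_div]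
  exact div_le_of_le_mul₀ (by positivity) hS0 key

theorem stmt6 (k ℓ m N : ℕ) (hk : 0 < k) (hl : 0 < ℓ) (hm : 0 < m)
    (w a : Fin N → ℝ)
    (hw0 : ∀ i, 0 ≤ w i) (hw1 : ∀ i, w i ≤ 1)
    (ha0 : ∀ i, 0 ≤ a i)
    (hwsum : ∑ i, w i ≤ (k : ℝ) / (ℓ : ℝ))
    (hwa : (m : ℝ) ≤ ∑ i, w i * a i)
    (T : Finset (Fin N)) (hTcard : T.card = min (k / ℓ) N)
    (hTtop : ∀ i ∈ T, ∀ j, j ∉ T → a j ≤ a i) :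
    ((m : ℝ) / ((k : ℝ) / (ℓ : ℝ))) * ((k / ℓ : ℕ) : ℝ) ≤ ∑ i ∈ T, a i :=
  stmt6_general k ℓ m N w a hw0 hw1 ha0 hwsum hwa T hTcard hTtop
end

section
/- In the modified Hochbaum-Shmoys algorithm for Fault-tolerant k-Supplier, suppose R ⊆ C is processed in nonincreasing order of ℓ_v, each j ∈ R receives child(j) = {v remaining : d(v,j) ≤ 2r}, and S ⊆ F contains ℓ_j points of B(j,r) for each j ∈ R. Then for every client v ∈ C, d_{ℓ_v}(v,S) ≤ 3r. -/
/-- The `a`-th smallest distance from `x` to the points of the finite set `S`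
(`a` is 1-indexed). -/
noncomputable def kthDist {X : Type*} [MetricSpace X] (x : X) (S : Finset X) (a : ℕ) : ℝ :=
  ((S.val.map (dist x)).sort (· ≤ ·)).getD (a - 1) 0

open Finset

namespace List.Pairwise

variable {α : Type*} [LinearOrder α] {l : List α}

theorem countP_le_le_of_lt_getElem (hl : l.Pairwise (· ≤ ·)) {i : ℕ} (hi : i < l.length)
    {D : α} (hD : D < l[i]) : l.countP (· ≤ D) ≤ i := by
  have hdrop : (l.drop i).countP (· ≤ D) = 0 := by
    refine List.countP_eq_zero.mpr fun x hx => ?_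
    obtain ⟨j, hj, rfl⟩ := List.mem_drop_iff_getElem.mp hx
    have : l[i] ≤ l[i + j] := hl.rel_get_of_le (a := ⟨i, hi⟩) (b := ⟨i + j, _⟩) (by simp)
    simpa using hD.trans_le this
  calc l.countP (· ≤ D) = (l.take i).countP (· ≤ D) + (l.drop i).countP (· ≤ D) := by
        rw [← List.countP_append, List.take_append_drop]
    _ ≤ i := by
        simpa [hdrop] using List.countP_le_length.trans (List.length_take_le i l)

theorem getD_le_of_lt_countP_le (hl : l.Pairwise (· ≤ ·)) {a : ℕ} {D : α} (d : α)
    (ha : a < l.countP (· ≤ D)) : l.getD a d ≤ D := by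
  have hlen : a < l.length := ha.trans_le List.countP_le_length
  rw [List.getD_eq_getElem l d hlen]
  by_contra! hlt
  exact (hl.countP_le_le_of_lt_getElem hlen hlt).not_gt ha

end List.Pairwise

section

variable {X : Type*} [MetricSpace X]

theorem kthDist_le_of_le_card_filter (x : X) (S : Finset X) {a : ℕ} {D : ℝ} (ha : 1 ≤ a)
    (h : a ≤ #(S.filter (dist x · ≤ D))) : kthDist x S a ≤ D := by
  refine (Multiset.pairwise_sort _ _).getD_le_of_lt_countP_le 0 ?_
  rw [← Multiset.coe_countP, Multiset.sort_eq, Multiset.countP_map]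
  change a - 1 < #(S.filter (dist x · ≤ D))
  omega

theorem card_filter_dist_le_mono (S : Finset X) {x y : X} {r₁ r₂ : ℝ}
    (hr : dist x y + r₁ ≤ r₂) : #(S.filter (dist y · ≤ r₁)) ≤ #(S.filter (dist x · ≤ r₂)) := by
  refine card_le_card (monotone_filter_right S fun s _ hs => ?_)
  linarith [dist_triangle x y s]

end

theorem stmt11_general {X : Type*} [MetricSpace X] [DecidableEq X] (r : ℝ)
    (C R S : Finset X) (ℓ : X → ℕ) (child : X → Finset X)
    (hpart : C = R.biUnion child)
    (hchild : ∀ j ∈ R, ∀ v ∈ child j, dist v j ≤ 2 * r ∧ ℓ v ≤ ℓ j)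
    (hopen : ∀ j ∈ R, ℓ j ≤ (S.filter (fun s => dist j s ≤ r)).card)
    (hl1 : ∀ v ∈ C, 1 ≤ ℓ v) :
    ∀ v ∈ C, kthDist v S (ℓ v) ≤ 3 * r := by
  intro v hv
  obtain ⟨j, hj, hvj⟩ := mem_biUnion.mp (hpart ▸ hv)
  obtain ⟨hdist, hℓ⟩ := hchild j hj v hvj
  refine kthDist_le_of_le_card_filter v S (hl1 v hv) ?_
  calc ℓ v ≤ ℓ j := hℓ
    _ ≤ #(S.filter (dist j · ≤ r)) := hopen j hj
    _ ≤ #(S.filter (dist v · ≤ 3 * r)) := card_filter_dist_le_mono S (by linarith)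

theorem stmt11 {X : Type*} [MetricSpace X] [DecidableEq X] (r : ℝ)
    (C F R S : Finset X) (ℓ : X → ℕ) (child : X → Finset X)
    (hRC : R ⊆ C) (hSF : S ⊆ F)
    (hpart : C = R.biUnion child)
    (hdisj : ∀ j ∈ R, ∀ j' ∈ R, j ≠ j' → Disjoint (child j) (child j'))
    (hchild : ∀ j ∈ R, ∀ v ∈ child j, dist v j ≤ 2 * r ∧ ℓ v ≤ ℓ j)
    (hopen : ∀ j ∈ R, ℓ j ≤ (S.filter (fun s => dist j s ≤ r)).card)
    (hl1 : ∀ v ∈ C, 1 ≤ ℓ v) :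
    ∀ v ∈ C, kthDist v S (ℓ v) ≤ 3 * r :=
  stmt11_general r C R S ℓ child hpart hchild hopen hl1
end

section
/- In the gap instance of k identical gadgets (each with k facilities at distance 1 from k big clients of fault-tolerance k, and one small client of fault-tolerance 1 at distance 1 from all k facilities of the gadget, gadgets infinitely far apart), any integral solution S ⊆ F with |S| ≤ k serves at most k clients within any finite radius; in particular, a big client of some gadget is served only if all k facilities of that gadget are open, in which case no facility is open in any other gadget. -/
/-!
Within radius α a client sees exactly the facilities of its own gadget, so a client of gadget g
is served iff `S` contains at least its demand of facilities from gadget g. A big client demands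
all `k` facilities of its gadget; with a budget of `k` this forces `S` to be that gadget, and then
the only other client that can be served is the small one of the same gadget. Hence either at
most `k + 1` clients of a single gadget are served, or only small clients, at most `k` of them.
-/

open Finset

namespace GapInstance

variable {ι β : Type*} [Fintype β]

def gadget : ι ⊕ ι × β → ι := Sum.elim id Prod.fst

def demand : ι ⊕ ι × β → ℕ := Sum.elim (fun _ => 1) (fun _ => Fintype.card β)

theorem demand_pos : ∀ c : ι ⊕ ι × β, 0 < demand c
  | .inl _ => Nat.one_pos
  | .inr (_, i) => Fintype.card_pos_iff.2 ⟨i⟩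

variable [Fintype ι] [DecidableEq ι]

def fiber (g : ι) : Finset (ι × β) := univ.filter fun f => f.1 = g

def servedClients (S : Finset (ι × β)) : Finset (ι ⊕ ι × β) :=
  univ.filter fun c => demand c ≤ #(S.filter fun f => f.1 = gadget c)

theorem mem_servedClients {S : Finset (ι × β)} {c : ι ⊕ ι × β} :
    c ∈ servedClients S ↔ demand c ≤ #(S.filter fun f => f.1 = gadget c) := by
  simp [servedClients]

theorem card_fiber (g : ι) : #(fiber (β := β) g) = Fintype.card β := by
  have : fiber (β := β) g = {g} ×ˢ univ := by ext ⟨a, b⟩; simp [fiber, eq_comm]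
  rw [this, card_product, card_singleton, card_univ, one_mul]

theorem eq_fiber_of_card_le_card_filter {S : Finset (ι × β)} {g : ι}
    (hS : #S ≤ Fintype.card β) (hg : Fintype.card β ≤ #(S.filter fun f => f.1 = g)) :
    S = fiber g := by
  have hfilter : S.filter (fun f => f.1 = g) = S :=
    eq_of_subset_of_card_le (filter_subset _ _) (hS.trans hg)
  have hsub : S ⊆ fiber g := fun f hf => by
    rw [← hfilter, mem_filter] at hf
    simp [fiber, hf.2]
  exact eq_of_subset_of_card_le hsub ((card_fiber g).trans_le (hfilter ▸ hg))

theorem eq_fiber_of_inr_mem_servedClients {S : Finset (ι × β)} (hS : #S ≤ Fintype.card β)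
    {g : ι} {i : β} (h : Sum.inr (g, i) ∈ servedClients S) : S = fiber g :=
  eq_fiber_of_card_le_card_filter hS (mem_servedClients.1 h)

theorem filter_fiber_eq_empty {g g' : ι} (hne : g' ≠ g) :
    (fiber (β := β) g).filter (fun f => f.1 = g') = ∅ :=
  filter_eq_empty_iff.2 fun _ hf hf' => hne (hf' ▸ (mem_filter.1 hf).2)

theorem servedClients_fiber_subset (g : ι) :
    servedClients (fiber (β := β) g) ⊆ ({g} : Finset ι).disjSum (fiber g) := by
  intro c hc
  have hgc : gadget c = g := by
    by_contra hne
    rw [mem_servedClients, filter_fiber_eq_empty hne, card_empty] at hc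
    exact (demand_pos c).not_ge hc
  rcases c with g' | ⟨g', i⟩ <;> simpa [gadget, fiber] using hgc

theorem servedClients_subset_disjSum_empty {S : Finset (ι × β)}
    (h : ∀ g i, Sum.inr (g, i) ∉ servedClients S) :
    servedClients S ⊆ univ.disjSum ∅ := by
  rintro (g | ⟨g, i⟩) hc
  · simp
  · exact absurd hc (h g i)

theorem card_servedClients_le {S : Finset (ι × β)} (hS : #S ≤ Fintype.card β) :
    #(servedClients S) ≤ max (Fintype.card ι) (1 + Fintype.card β) := by
  by_cases hbig : ∃ g i, Sum.inr (g, i) ∈ servedClients S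
  · obtain ⟨g, i, hgi⟩ := hbig
    calc #(servedClients S) ≤ #(({g} : Finset ι).disjSum (fiber (β := β) g)) := by
          rw [eq_fiber_of_inr_mem_servedClients hS hgi]
          exact card_le_card (servedClients_fiber_subset g)
      _ = 1 + Fintype.card β := by rw [card_disjSum, card_singleton, card_fiber]
      _ ≤ _ := le_max_right _ _
  · push Not at hbig
    calc #(servedClients S) ≤ #((univ : Finset ι).disjSum (∅ : Finset (ι × β))) :=
          card_le_card (servedClients_subset_disjSum_empty hbig)
      _ = Fintype.card ι := by rw [card_disjSum, card_univ, card_empty, add_zero]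
      _ ≤ _ := le_max_left _ _

end GapInstance

open GapInstance

theorem stmt15 (k : ℕ) (hk : 2 ≤ k) (α : ℝ)
    (d : (Fin k ⊕ Fin k × Fin k) → (Fin k × Fin k) → ℝ)
    (hin_small : ∀ (g : Fin k) (f : Fin k × Fin k), f.1 = g → d (Sum.inl g) f ≤ α)
    (hin_big : ∀ (g i : Fin k) (f : Fin k × Fin k), f.1 = g → d (Sum.inr (g, i)) f ≤ α)
    (hout_small : ∀ (g : Fin k) (f : Fin k × Fin k), f.1 ≠ g → α < d (Sum.inl g) f)
    (hout_big : ∀ (g i : Fin k) (f : Fin k × Fin k), f.1 ≠ g → α < d (Sum.inr (g, i)) f)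
    (S : Finset (Fin k × Fin k)) (hS : S.card ≤ k)
    (ℓc : (Fin k ⊕ Fin k × Fin k) → ℕ)
    (hℓc : ℓc = Sum.elim (fun _ => 1) (fun _ => k))
    (served : Finset (Fin k ⊕ Fin k × Fin k))
    (hserved : served =
      Finset.univ.filter (fun c => ℓc c ≤ (S.filter (fun f => d c f ≤ α)).card)) :
    served.card < 2 * k ∧
    ∀ g i : Fin k, Sum.inr (g, i) ∈ served →
      S = Finset.univ.filter (fun f : Fin k × Fin k => f.1 = g) := by
  have hball : ∀ c f, d c f ≤ α ↔ f.1 = gadget c := by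
    rintro (g | ⟨g, i⟩) f
    · exact ⟨fun h => by_contra fun hne => (hout_small g f hne).not_ge h, hin_small g f⟩
    · exact ⟨fun h => by_contra fun hne => (hout_big g i f hne).not_ge h, hin_big g i f⟩
  have hserved_eq : served = servedClients S := by
    ext c
    simp [hserved, hℓc, mem_servedClients, hball, demand]
  have hSk : #S ≤ Fintype.card (Fin k) := by simpa using hS
  subst hserved_eq
  refine ⟨?_, fun g i h => eq_fiber_of_inr_mem_servedClients hSk h⟩
  have hcard := card_servedClients_le hSk
  simp only [Fintype.card_fin] at hcard
  omega
end

section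
/- Let R be a finite set of points in a metric space processed in some order, and build a directed forest by: when processing j, add edges from j to all current roots j' with d(j,j') ≤ 2^{h(j')}·r, then set h(j) := 1 + max of h over j's new children (0 if none), and make j a root. Suppose additionally that whenever (j,j') is an edge, ℓ_j > ℓ_{j'} for labels ℓ taking at most t distinct values. Then every tree in the resulting forest has root height at most t, and every vertex w in a tree with root ρ satisfies d(ρ,w) ≤ (2^{h(ρ)} − 2^{h(w)})·r ≤ (2^t − 1)·r. -/
/-!
Following a child that realises the height of a vertex and repeating, a vertex of height `n`
sits on top of a chain of `n + 1` vertices with strictly decreasing labels, so `n` is less than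
the number of labels. Along the path from `w` to its root, the edge leaving a vertex `u` has
length at most `2 ^ h u * r` and heights increase by at least one per edge, so the lengths add
up to at most the telescoping sum `(2 ^ h ρ - 2 ^ h w) * r`.
-/

open Finset

theorem height_lt_card_labels_le {V α : Type*} [Fintype V] [LinearOrder α]
    {parent : V → V} {h : V → ℕ} {ℓ : V → α}
    (hℓ : ∀ w, parent w ≠ w → ℓ w < ℓ (parent w))
    (hheight : ∀ v, (∃ w, w ≠ v ∧ parent w = v) → ∃ w, w ≠ v ∧ parent w = v ∧ h v = h w + 1)
    (hleaf : ∀ v, (¬∃ w, w ≠ v ∧ parent w = v) → h v = 0) (v : V) :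
    h v < ((univ.image ℓ).filter (· ≤ ℓ v)).card := by
  induction hv : h v generalizing v with
  | zero =>
    exact card_pos.mpr ⟨ℓ v, mem_filter.mpr ⟨mem_image_of_mem ℓ (mem_univ v), le_rfl⟩⟩
  | succ n ih =>
    by_cases hchild : ∃ w, w ≠ v ∧ parent w = v
    · obtain ⟨w, hwv, rfl, hvw⟩ := hheight v hchild
      have hlt : ℓ w < ℓ (parent w) := hℓ w fun e => hwv e.symm
      have hsub : (univ.image ℓ).filter (· ≤ ℓ w) ⊂ (univ.image ℓ).filter (· ≤ ℓ (parent w)) :=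
        ssubset_iff_of_subset (monotone_filter_right _ fun _ _ hx => hx.trans hlt.le) |>.mpr
          ⟨ℓ (parent w), by simp, fun hmem => (mem_filter.mp hmem).2.not_gt hlt⟩
      have hw := ih w (by omega)
      have hcard := card_lt_card hsub
      omega
    · exact absurd (hleaf v hchild) (by omega)

theorem height_lt_card_image {V α : Type*} [Fintype V] [LinearOrder α]
    {parent : V → V} {h : V → ℕ} {ℓ : V → α}
    (hℓ : ∀ w, parent w ≠ w → ℓ w < ℓ (parent w))
    (hheight : ∀ v, (∃ w, w ≠ v ∧ parent w = v) → ∃ w, w ≠ v ∧ parent w = v ∧ h v = h w + 1)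
    (hleaf : ∀ v, (¬∃ w, w ≠ v ∧ parent w = v) → h v = 0) (v : V) :
    h v < (univ.image ℓ).card :=
  (height_lt_card_labels_le hℓ hheight hleaf v).trans_le (card_filter_le _ _)

theorem dist_iterate_le {X V : Type*} [PseudoMetricSpace X]
    {parent : V → V} {pos : V → X} {h : V → ℕ} {r : ℝ} (hr : 0 ≤ r)
    (hdec : ∀ w, parent w ≠ w → h w < h (parent w))
    (hlen : ∀ w, parent w ≠ w → dist (pos (parent w)) (pos w) ≤ 2 ^ h w * r) (n : ℕ) (w : V) :
    dist (pos (parent^[n] w)) (pos w) ≤ (2 ^ h (parent^[n] w) - 2 ^ h w) * r := by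
  induction n generalizing w with
  | zero => simp
  | succ n ih =>
    by_cases hfix : parent w = w
    · simp [Function.iterate_fixed hfix]
    · rw [Function.iterate_succ_apply]
      have hpow : (2 : ℝ) ^ h w * 2 ≤ 2 ^ h (parent w) := by
        rw [← pow_succ]
        exact pow_le_pow_right₀ one_le_two (hdec w hfix)
      calc dist (pos (parent^[n] (parent w))) (pos w)
          ≤ dist (pos (parent^[n] (parent w))) (pos (parent w)) + dist (pos (parent w)) (pos w) :=
            dist_triangle _ _ _
        _ ≤ (2 ^ h (parent^[n] (parent w)) - 2 ^ h (parent w)) * r + 2 ^ h w * r :=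
            add_le_add (ih (parent w)) (hlen w hfix)
        _ ≤ (2 ^ h (parent^[n] (parent w)) - 2 ^ h w) * r := by nlinarith

theorem stmt16_general {X : Type*} [MetricSpace X] {V : Type*} [Fintype V]
    (r : ℝ) (hr : 0 ≤ r) (t : ℕ)
    (parent : V → V) (pos : V → X) (h : V → ℕ) (ℓ : V → ℕ)
    (hlab : (Finset.univ.image ℓ).card ≤ t)
    (hdec : ∀ w : V, parent w ≠ w → h w < h (parent w))
    (hlen : ∀ w : V, parent w ≠ w → dist (pos (parent w)) (pos w) ≤ (2 : ℝ) ^ (h w) * r)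
    (hℓ : ∀ w : V, parent w ≠ w → ℓ w < ℓ (parent w))
    (hheight : ∀ v : V, (∃ w, w ≠ v ∧ parent w = v) →
      ∃ w, w ≠ v ∧ parent w = v ∧ h v = h w + 1)
    (hleaf : ∀ v : V, (¬∃ w, w ≠ v ∧ parent w = v) → h v = 0) :
    ∀ ρ w : V, parent ρ = ρ → (∃ n : ℕ, parent^[n] w = ρ) →
      h ρ ≤ t ∧
      dist (pos ρ) (pos w) ≤ ((2 : ℝ) ^ (h ρ) - (2 : ℝ) ^ (h w)) * r ∧
      ((2 : ℝ) ^ (h ρ) - (2 : ℝ) ^ (h w)) * r ≤ ((2 : ℝ) ^ t - 1) * r := by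
  rintro ρ w - ⟨n, rfl⟩
  have hρt : h (parent^[n] w) ≤ t := ((height_lt_card_image hℓ hheight hleaf _).trans_le hlab).le
  refine ⟨hρt, dist_iterate_le hr hdec hlen n w, ?_⟩
  gcongr
  · exact one_le_two
  · exact one_le_pow₀ one_le_two

theorem stmt16 {X : Type*} [MetricSpace X] {V : Type*} [Fintype V] [DecidableEq V]
    (r : ℝ) (hr : 0 ≤ r) (t : ℕ)
    (parent : V → V) (pos : V → X) (h : V → ℕ) (ℓ : V → ℕ)
    (hlab : (Finset.univ.image ℓ).card ≤ t)
    (hreach : ∀ v : V, ∃ n : ℕ, parent (parent^[n] v) = parent^[n] v)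
    (hdec : ∀ w : V, parent w ≠ w → h w < h (parent w))
    (hlen : ∀ w : V, parent w ≠ w → dist (pos (parent w)) (pos w) ≤ (2 : ℝ) ^ (h w) * r)
    (hℓ : ∀ w : V, parent w ≠ w → ℓ w < ℓ (parent w))
    (hheight : ∀ v : V, (∃ w, w ≠ v ∧ parent w = v) →
      ∃ w, w ≠ v ∧ parent w = v ∧ h v = h w + 1)
    (hleaf : ∀ v : V, (¬∃ w, w ≠ v ∧ parent w = v) → h v = 0) :
    ∀ ρ w : V, parent ρ = ρ → (∃ n : ℕ, parent^[n] w = ρ) →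
      h ρ ≤ t ∧
      dist (pos ρ) (pos w) ≤ ((2 : ℝ) ^ (h ρ) - (2 : ℝ) ^ (h w)) * r ∧
      ((2 : ℝ) ^ (h ρ) - (2 : ℝ) ^ (h w)) * r ≤ ((2 : ℝ) ^ t - 1) * r :=
  stmt16_general r hr t parent pos h ℓ hlab hdec hlen hℓ hheight hleaf
end

section
/- Let (cov, x) be a feasible solution to the UFkSO LP: Σ_v cov_v ≥ m, Σ_i x_i ≤ k, Σ_{i ∈ F ∩ B(v,r)} x_i ≥ ℓ·cov_v for all v, cov_v = 0 whenever d_ℓ(v,F) > r, and 0 ≤ cov_v, x_i ≤ 1. If R ⊆ C is any r-well-separated set, then Σ_{j∈R} cov_j ≤ k/ℓ. -/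
/-! Balls of radius `r` around the points of an `r`-well-separated set are pairwise disjoint, so
the LP constraints `ℓ · cov j ≤ x(F ∩ B(j, r))` for `j ∈ R` add up to `ℓ · Σ_{j∈R} cov j ≤ x(F) ≤ k`. -/

open Finset

theorem Finset.disjoint_filter_dist_le_of_two_mul_lt_dist {X : Type*} [PseudoMetricSpace X]
    (F : Finset X) {r : ℝ} {a b : X} (hab : 2 * r < dist a b) :
    Disjoint (F.filter (dist a · ≤ r)) (F.filter (dist b · ≤ r)) := by
  rw [Finset.disjoint_left]
  intro i hia hib
  exact Set.disjoint_left.1 (Metric.closedBall_disjoint_closedBall (by linarith))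
    (Metric.mem_closedBall'.2 (mem_filter.1 hia).2) (Metric.mem_closedBall'.2 (mem_filter.1 hib).2)

theorem Finset.sum_sum_filter_dist_le_sum {X M : Type*} [PseudoMetricSpace X]
    [AddCommMonoid M] [PartialOrder M] [IsOrderedAddMonoid M] {r : ℝ} {R F : Finset X}
    {x : X → M} (hx : ∀ i ∈ F, 0 ≤ x i)
    (hsep : (R : Set X).Pairwise fun a b => 2 * r < dist a b) :
    ∑ j ∈ R, ∑ i ∈ F.filter (dist j · ≤ r), x i ≤ ∑ i ∈ F, x i := by
  classical
  rw [← sum_biUnion fun a ha b hb hab =>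
    F.disjoint_filter_dist_le_of_two_mul_lt_dist (hsep ha hb hab)]
  exact sum_le_sum_of_subset_of_nonneg (biUnion_subset.2 fun _ _ => filter_subset _ _)
    fun i hi _ => hx i hi

theorem stmt17_general {X : Type*} [MetricSpace X] (r : ℝ) (k ℓ : ℕ) (hl : 1 ≤ ℓ)
    (C F : Finset X) (cov : X → ℝ) (x : X → ℝ)
    (hk : ∑ i ∈ F, x i ≤ (k : ℝ))
    (hball : ∀ v ∈ C, (ℓ : ℝ) * cov v ≤ ∑ i ∈ F.filter (fun i => dist v i ≤ r), x i)
    (hxb : ∀ i ∈ F, 0 ≤ x i ∧ x i ≤ 1)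
    (R : Finset X) (hRC : R ⊆ C)
    (hsep : ∀ a ∈ R, ∀ b ∈ R, a ≠ b → 2 * r < dist a b) :
    ∑ j ∈ R, cov j ≤ (k : ℝ) / (ℓ : ℝ) := by
  have hℓ : (0 : ℝ) < ℓ := by exact_mod_cast hl
  rw [le_div_iff₀ hℓ, mul_comm, mul_sum]
  calc ∑ j ∈ R, (ℓ : ℝ) * cov j
      ≤ ∑ j ∈ R, ∑ i ∈ F.filter (fun i => dist j i ≤ r), x i :=
        sum_le_sum fun j hj => hball j (hRC hj)
    _ ≤ ∑ i ∈ F, x i :=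
        sum_sum_filter_dist_le_sum (fun i hi => (hxb i hi).1)
          fun a ha b hb hab => hsep a ha b hb hab
    _ ≤ k := hk

theorem stmt17 {X : Type*} [MetricSpace X] (r : ℝ) (k m ℓ : ℕ) (hl : 1 ≤ ℓ)
    (C F : Finset X) (cov : X → ℝ) (x : X → ℝ)
    (hm : (m : ℝ) ≤ ∑ v ∈ C, cov v)
    (hk : ∑ i ∈ F, x i ≤ (k : ℝ))
    (hball : ∀ v ∈ C, (ℓ : ℝ) * cov v ≤ ∑ i ∈ F.filter (fun i => dist v i ≤ r), x i)
    (hfar : ∀ v ∈ C, (F.filter (fun i => dist v i ≤ r)).card < ℓ → cov v = 0)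
    (hcovb : ∀ v ∈ C, 0 ≤ cov v ∧ cov v ≤ 1)
    (hxb : ∀ i ∈ F, 0 ≤ x i ∧ x i ≤ 1)
    (R : Finset X) (hRC : R ⊆ C)
    (hsep : ∀ a ∈ R, ∀ b ∈ R, a ≠ b → 2 * r < dist a b) :
    ∑ j ∈ R, cov j ≤ (k : ℝ) / (ℓ : ℝ) :=
  stmt17_general r k ℓ hl C F cov x hk hball hxb R hRC hsep
end
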